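/- For p ∈ [0,1], define the channel K_p from M₂⊗M₂ to M₂⊗M₂ as the linear extension of K_p(X⊗Y) := p·Y⊗(Tr[X]·π) + (1−p)·(Tr[Y]·π)⊗X, where π := I/2; this is the second KPF16 protocol, which with probability p teleports Alice's qubit to Bob while replacing Bob's input by the maximally mixed state, and with probability 1−p does the reverse. Let S be the qubit swap channel, the linear extension of X⊗Y ↦ Y⊗X. Then for every p ∈ [0,1], the normalized diamond distance satisfies (1/2)‖K_p − S‖⋄ = 3/4. -/

import Mathlib

open Matrix Kronecker
open scoped ComplexOrder

noncomputable section

/-- The trace norm `‖X‖₁ = Tr[√(X†X)]`. -/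
def traceNorm {n : Type*} [Fintype n] [DecidableEq n] (X : Matrix n n ℂ) : ℝ :=
  (((Matrix.posSemidef_conjTranspose_mul_self X).1.eigenvectorUnitary.1 *
    diagonal ((fun x : ℝ => (x : ℂ)) ∘ (√·) ∘ (Matrix.posSemidef_conjTranspose_mul_self X).1.eigenvalues) *
    (star (Matrix.posSemidef_conjTranspose_mul_self X).1.eigenvectorUnitary : Matrix n n ℂ)).trace).re

/-- The extension `id_k ⊗ Φ` of a map on matrices, with the identity on the first factor. -/
def idTensor {k n m : Type*} (Φ : Matrix n n ℂ → Matrix m m ℂ)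
    (M : Matrix (k × n) (k × n) ℂ) : Matrix (k × m) (k × m) ℂ :=
  Matrix.of fun p q => Φ (Matrix.of fun a b => M (p.1, a) (q.1, b)) p.2 q.2

/-- A density matrix: positive semidefinite with unit trace. -/
def IsState {n : Type*} [Fintype n] (ρ : Matrix n n ℂ) : Prop :=
  ρ.PosSemidef ∧ ρ.trace = 1

/-- Normalized diamond distance between two maps on matrices, as the supremum over
bipartite input states (with a reference system of the same dimension as the input)
of the normalized trace distance of the outputs. -/
def dDist {n m : Type*} [Fintype n] [DecidableEq n] [Fintype m] [DecidableEq m]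
    (N M : Matrix n n ℂ → Matrix m m ℂ) : ℝ :=
  sSup {x : ℝ | ∃ ρ : Matrix (n × n) (n × n) ℂ, IsState ρ ∧
    x = (1 / 2) * traceNorm (idTensor N ρ - idTensor M ρ)}

/-- Complete positivity of a linear map on matrices: every finite identity extension
preserves positive semidefiniteness. -/
def IsCP {n m : Type*} [Fintype n] [DecidableEq n] [Fintype m] [DecidableEq m]
    (Φ : Matrix n n ℂ →ₗ[ℂ] Matrix m m ℂ) : Prop :=
  ∀ (r : ℕ) (M : Matrix (Fin r × n) (Fin r × n) ℂ), M.PosSemidef →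
    (idTensor (fun X => Φ X) M).PosSemidef

/-- Trace preservation of a linear map on matrices. -/
def IsTP {n m : Type*} [Fintype n] [Fintype m]
    (Φ : Matrix n n ℂ →ₗ[ℂ] Matrix m m ℂ) : Prop :=
  ∀ X, (Φ X).trace = X.trace

/-- Choi operator of a map on matrices: `Γ^Φ = Σ_{i,j} |i⟩⟨j| ⊗ Φ(|i⟩⟨j|)`. -/
def choi {n m : Type*} [DecidableEq n]
    (Φ : Matrix n n ℂ → Matrix m m ℂ) : Matrix (n × m) (n × m) ℂ :=
  Matrix.of fun p q => Φ (Matrix.single p.1 q.1 1) p.2 q.2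

/-- The swap operator `F = Σ_{i,j} |i⟩⟨j| ⊗ |j⟩⟨i|` on `ℂ^d ⊗ ℂ^d`. -/
def swapOp (d : ℕ) : Matrix (Fin d × Fin d) (Fin d × Fin d) ℂ :=
  Matrix.of fun p q => if p.1 = q.2 ∧ p.2 = q.1 then 1 else 0

/-- The swap channel `S^d(X) = F X F†`. -/
def swapCh (d : ℕ) (X : Matrix (Fin d × Fin d) (Fin d × Fin d) ℂ) :
    Matrix (Fin d × Fin d) (Fin d × Fin d) ℂ :=
  swapOp d * X * (swapOp d)ᴴ

/-- Square root of a positive semidefinite matrix (junk value `0` otherwise). -/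
def msqrt {n : Type*} [Fintype n] [DecidableEq n] (X : Matrix n n ℂ) : Matrix n n ℂ :=
  letI := Classical.propDecidable X.PosSemidef
  if h : X.PosSemidef then
    h.1.eigenvectorUnitary.1 * diagonal ((fun x : ℝ => (x : ℂ)) ∘ (√·) ∘ h.1.eigenvalues) *
      (star h.1.eigenvectorUnitary : Matrix n n ℂ) else 0

/-- Fidelity `F(ω,τ) = ‖√ω √τ‖₁²`. -/
def fid {n : Type*} [Fintype n] [DecidableEq n] (ω τ : Matrix n n ℂ) : ℝ :=
  (traceNorm (msqrt ω * msqrt τ)) ^ 2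

/-- Channel fidelity: the infimum of output fidelities over bipartite input states. -/
def cFid {n m : Type*} [Fintype n] [DecidableEq n] [Fintype m] [DecidableEq m]
    (N M : Matrix n n ℂ → Matrix m m ℂ) : ℝ :=
  sInf {x : ℝ | ∃ ρ : Matrix (n × n) (n × n) ℂ, IsState ρ ∧
    x = fid (idTensor N ρ) (idTensor M ρ)}

/-- Partial trace over the second (right) factor. -/
def ptrR {a b : Type*} [Fintype b] (X : Matrix (a × b) (a × b) ℂ) : Matrix a a ℂ :=
  Matrix.of fun i j => ∑ k, X (i, k) (j, k)

/-- Unnormalized maximally entangled operator `Γ = |Γ⟩⟨Γ|` on `ℂ^D ⊗ ℂ^D`. -/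
def gamOp (D : ℕ) : Matrix (Fin D × Fin D) (Fin D × Fin D) ℂ :=
  Matrix.of fun p q => if p.1 = p.2 ∧ q.1 = q.2 then 1 else 0

/-- Maximally entangled state `Φ = Γ/D` on `ℂ^D ⊗ ℂ^D`. -/
def phiD (D : ℕ) : Matrix (Fin D × Fin D) (Fin D × Fin D) ℂ :=
  ((D : ℂ))⁻¹ • gamOp D

/-- Partial transpose over Bob's factors `B, B̂, B'` of a matrix on the six factors
`(A ⊗ B) ⊗ (Â ⊗ B̂) ⊗ (A' ⊗ B')`. -/
def ptB6 {A B AH BH A' B' : Type*}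
    (X : Matrix (((A × B) × (AH × BH)) × (A' × B')) (((A × B) × (AH × BH)) × (A' × B')) ℂ) :
    Matrix (((A × B) × (AH × BH)) × (A' × B')) (((A × B) × (AH × BH)) × (A' × B')) ℂ :=
  Matrix.of fun p q =>
    X (((p.1.1.1, q.1.1.2), (p.1.2.1, q.1.2.2)), (p.2.1, q.2.2))
      (((q.1.1.1, p.1.1.2), (q.1.2.1, p.1.2.2)), (q.2.1, p.2.2))

/-- Partial transpose over the factor `B̂` of a matrix on `Â ⊗ B̂`. -/
def ptBh2 {AH BH : Type*} (X : Matrix (AH × BH) (AH × BH) ℂ) : Matrix (AH × BH) (AH × BH) ℂ :=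
  Matrix.of fun g g' => X (g.1, g'.2) (g'.1, g.2)

/-- Contraction `Tr_{ÂB̂}[(T_{ÂB̂}(ρ) ⊗ I) P]` of a six-factor operator with a resource state,
yielding the Choi operator of the induced channel `ω ↦ P(ω ⊗ ρ)`. -/
def contractRes {A B AH BH A' B' : Type*} [Fintype AH] [Fintype BH]
    (ρ : Matrix (AH × BH) (AH × BH) ℂ)
    (P : Matrix (((A × B) × (AH × BH)) × (A' × B')) (((A × B) × (AH × BH)) × (A' × B')) ℂ) :
    Matrix ((A × B) × (A' × B')) ((A × B) × (A' × B')) ℂ :=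
  Matrix.of fun p q => ∑ h, ∑ h', ρ h h' * P ((p.1, h), p.2) ((q.1, h'), q.2)


/-- The maximally mixed qubit state `π = I/2`. -/
def piq : Matrix (Fin 2) (Fin 2) ℂ := (2 : ℂ)⁻¹ • 1

/-- The qubit maximally entangled state `Φ = Γ/2`. -/
def phiQ : Matrix (Fin 2 × Fin 2) (Fin 2 × Fin 2) ℂ := (2 : ℂ)⁻¹ • gamOp 2

/-- Partial trace over the first qubit factor. -/
def ptrFst (X : Matrix (Fin 2 × Fin 2) (Fin 2 × Fin 2) ℂ) : Matrix (Fin 2) (Fin 2) ℂ :=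
  Matrix.of fun j j' => ∑ i, X (i, j) (i, j')

/-- Partial trace over the second qubit factor. -/
def ptrSnd (X : Matrix (Fin 2 × Fin 2) (Fin 2 × Fin 2) ℂ) : Matrix (Fin 2) (Fin 2) ℂ :=
  Matrix.of fun i i' => ∑ j, X (i, j) (i', j)

/-- The first KPF16 bipartite channel with trigger probabilities `p₁, p₂`: the linear
extension of `X ⊗ Y ↦ (1−p₁)(1−p₂)·Tr[X]Tr[Y]·Φ + (1−p₁)p₂·Y ⊗ (Tr[X]·π)
+ p₁(1−p₂)·(Tr[Y]·π) ⊗ X + p₁p₂·Tr[X]Tr[Y]·π⊗π`. -/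
def kpfCh (p₁ p₂ : ℝ) (ρ : Matrix (Fin 2 × Fin 2) (Fin 2 × Fin 2) ℂ) :
    Matrix (Fin 2 × Fin 2) (Fin 2 × Fin 2) ℂ :=
  (((1 - p₁) * (1 - p₂) : ℝ) : ℂ) • ρ.trace • phiQ
    + (((1 - p₁) * p₂ : ℝ) : ℂ) • (ptrFst ρ ⊗ₖ piq)
    + ((p₁ * (1 - p₂) : ℝ) : ℂ) • (piq ⊗ₖ ptrSnd ρ)
    + ((p₁ * p₂ : ℝ) : ℂ) • ρ.trace • (piq ⊗ₖ piq)

/-- The second KPF16 channel: with probability `p` teleport Alice's qubit to Bob while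
replacing Bob's input by the maximally mixed state, and with probability `1 − p` the
reverse; the linear extension of
`X ⊗ Y ↦ p·Y ⊗ (Tr[X]·π) + (1−p)·(Tr[Y]·π) ⊗ X`. -/
def kpf2Ch (p : ℝ) (ρ : Matrix (Fin 2 × Fin 2) (Fin 2 × Fin 2) ℂ) :
    Matrix (Fin 2 × Fin 2) (Fin 2 × Fin 2) ℂ :=
  ((p : ℝ) : ℂ) • (ptrFst ρ ⊗ₖ piq) + (((1 - p) : ℝ) : ℂ) • (piq ⊗ₖ ptrSnd ρ)

/-!
Let `σ` be the output of the swap on an input `ρ`. The KPF16 channel outputs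
`p • D_B σ + (1 - p) • D_A σ`, where `D_A`, `D_B` replace one output qubit by `π`. Such a
replacement averages `σ` over conjugations of that qubit, so `4 • D σ - σ` is a sum of conjugates
of `σ`, and `σ ≤ 4 • τ` for the KPF16 output `τ`. Then `τ - σ = (τ - σ/4) - 3/4 • σ` is a
difference of two positive matrices of trace `3/4`, so `‖τ - σ‖₁ ≤ 3/2`.

Equality holds for the input whose swap is `Φ_{R₁A} ⊗ Φ_{R₂B}`: there the difference of the
outputs is `p/4 • Φ ⊗ (1 - Φ) + (1-p)/4 • (1 - Φ) ⊗ Φ - 3/4 • Φ ⊗ Φ`, a difference of positive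
matrices with orthogonal supports, whose trace norm is the sum of their traces, `3/4 + 3/4`.
-/

open scoped MatrixOrder

section TraceNorm

variable {n : Type*} [Fintype n] [DecidableEq n]

theorem traceNorm_eq_re_trace_of_sq_eq {X Y : Matrix n n ℂ} (hY : Y.PosSemidef)
    (h : Y ^ 2 = Xᴴ * X) : traceNorm X = Y.trace.re := by
  have hXX := posSemidef_conjTranspose_mul_self X
  have hsqrt : CFC.sqrt (Xᴴ * X) = Y :=
    (CFC.sqrt_eq_iff _ _ hXX.nonneg hY.nonneg).2 (by rw [← sq, h])
  rw [CFC.sqrt_eq_cfc, cfc_nnreal_eq_real _ _, hXX.1.cfc_eq] at hsqrt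
  rw [traceNorm, ← hsqrt]
  simp only [IsHermitian.cfc, Unitary.conjStarAlgAut_apply]
  congr 5
  funext i
  simp [max_eq_left (hXX.eigenvalues_nonneg i)]

theorem traceNorm_eq_sum_abs_eigenvalues {X : Matrix n n ℂ} (hX : X.IsHermitian) :
    traceNorm X = ∑ i, |hX.eigenvalues i| := by
  have hY : (cfc (fun x : ℝ => |x|) X).PosSemidef :=
    nonneg_iff_posSemidef.1 (cfc_nonneg fun x _ => abs_nonneg x)
  rw [traceNorm_eq_re_trace_of_sq_eq hY]
  · rw [hX.cfc_eq, IsHermitian.cfc, Unitary.conjStarAlgAut_apply, trace_mul_cycle,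
      Unitary.coe_star_mul_self, one_mul, trace_diagonal, Complex.re_sum]
    simp
  · rw [← cfc_pow _ _ X, hX.eq, ← sq]
    simp only [sq_abs]
    exact cfc_pow_id X 2

theorem sum_star_dotProduct_mulVec_eigenvectorBasis {X : Matrix n n ℂ} (hX : X.IsHermitian)
    (M : Matrix n n ℂ) :
    ∑ i, star ⇑(hX.eigenvectorBasis i) ⬝ᵥ (M *ᵥ ⇑(hX.eigenvectorBasis i)) = M.trace := by
  set U := hX.eigenvectorUnitary
  have hconj : (star (U : Matrix n n ℂ) * M * U).trace = M.trace := by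
    rw [trace_mul_cycle, ← Unitary.coe_star, Unitary.coe_mul_star_self, one_mul]
  rw [← hconj, trace]
  refine Finset.sum_congr rfl fun i _ => ?_
  simp [U, mul_apply, dotProduct, mulVec, Finset.mul_sum, mul_assoc]

theorem traceNorm_sub_le {A B : Matrix n n ℂ} (hA : A.PosSemidef) (hB : B.PosSemidef) :
    traceNorm (A - B) ≤ (A.trace + B.trace).re := by
  have hX := hA.1.sub hB.1
  rw [traceNorm_eq_sum_abs_eigenvalues hX, ← sum_star_dotProduct_mulVec_eigenvectorBasis hX A,
    ← sum_star_dotProduct_mulVec_eigenvectorBasis hX B, ← Finset.sum_add_distrib, Complex.re_sum]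
  refine Finset.sum_le_sum fun i _ => ?_
  have ha := hA.re_dotProduct_nonneg (hX.eigenvectorBasis i)
  have hb := hB.re_dotProduct_nonneg (hX.eigenvectorBasis i)
  rw [hX.eigenvalues_eq, sub_mulVec, dotProduct_sub, map_sub, Complex.add_re]
  exact abs_sub_le_of_nonneg_of_le ha (by simpa using hb) hb (by simpa using ha)

theorem traceNorm_sub_of_mul_eq_zero {A B : Matrix n n ℂ} (hA : A.PosSemidef) (hB : B.PosSemidef)
    (hAB : A * B = 0) : traceNorm (A - B) = (A.trace + B.trace).re := by
  have hBA : B * A = 0 := by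
    rw [← hA.1.eq, ← hB.1.eq, ← conjTranspose_mul, hAB, conjTranspose_zero]
  rw [← trace_add]
  refine traceNorm_eq_re_trace_of_sq_eq (hA.add hB) ?_
  rw [conjTranspose_sub, hA.1.eq, hB.1.eq, sq]
  simp only [add_mul, mul_add, sub_mul, mul_sub, hAB, hBA]
  abel

theorem traceNorm_sub_le_of_posSemidef_smul_sub {σ τ : Matrix n n ℂ} (hσ : σ.PosSemidef)
    (hσ1 : σ.trace = 1) (hτ1 : τ.trace = 1) {c : ℝ} (hc : 1 ≤ c)
    (hdom : (c • τ - σ).PosSemidef) : traceNorm (τ - σ) ≤ 2 * (1 - c⁻¹) := by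
  have hc0 : 0 < c := by linarith
  have hsplit : τ - σ = c⁻¹ • (c • τ - σ) - (1 - c⁻¹) • σ := by
    rw [smul_sub, smul_smul, inv_mul_cancel₀ hc0.ne', one_smul]
    module
  have hA := hdom.smul (inv_nonneg.2 hc0.le)
  have hB := hσ.smul (sub_nonneg.2 (inv_le_one_of_one_le₀ hc))
  calc traceNorm (τ - σ) ≤ _ := hsplit ▸ traceNorm_sub_le hA hB
    _ = 2 * (1 - c⁻¹) := by
      simp [trace_sub, trace_smul, hσ1, hτ1]
      field_simp
      ring

end TraceNorm

theorem trace_submatrix_equiv {ι κ R : Type*} [Fintype ι] [Fintype κ] [AddCommMonoid R]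
    (M : Matrix ι ι R) (e : κ ≃ ι) : (M.submatrix e e).trace = M.trace :=
  Fintype.sum_equiv e _ _ fun _ => rfl

theorem trace_ptrR {n m : Type*} [Fintype n] [Fintype m] (σ : Matrix (n × m) (n × m) ℂ) :
    (ptrR σ).trace = σ.trace :=
  (Fintype.sum_prod_type fun p => σ p p).symm

theorem trace_piq : piq.trace = 1 := by
  simp [piq, trace_smul]

theorem ptrR_kronecker_one_eq_sum {n m : Type*} [Fintype n] [DecidableEq n] [Fintype m]
    [DecidableEq m] (σ : Matrix (n × m) (n × m) ℂ) :
    ptrR σ ⊗ₖ (1 : Matrix m m ℂ) = ∑ b, ∑ k,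
      ((1 : Matrix n n ℂ) ⊗ₖ single b k 1) * σ * ((1 : Matrix n n ℂ) ⊗ₖ single b k 1)ᴴ := by
  ext ⟨i, c⟩ ⟨j, c'⟩
  simp [ptrR, Matrix.sum_apply, mul_apply, one_apply, single_apply, Fintype.sum_prod_type,
    ite_and, eq_comm, apply_ite (starRingEnd ℂ)]

theorem posSemidef_two_smul_ptrR_kronecker_one_sub {n : Type*} [Fintype n] [DecidableEq n]
    {σ : Matrix (n × Fin 2) (n × Fin 2) ℂ} (hσ : σ.PosSemidef) :
    ((2 : ℝ) • (ptrR σ ⊗ₖ (1 : Matrix (Fin 2) (Fin 2) ℂ)) - σ).PosSemidef := by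
  set K : Fin 2 → Fin 2 → Matrix (n × Fin 2) (n × Fin 2) ℂ :=
    fun b k => (1 : Matrix n n ℂ) ⊗ₖ single b k 1
  have hK : K 0 0 + K 1 1 = 1 := by
    have h : single 0 0 1 + single 1 1 1 = (1 : Matrix (Fin 2) (Fin 2) ℂ) := by
      ext i j
      fin_cases i <;> fin_cases j <;> simp
    simp only [K, ← kronecker_add, h, one_kronecker_one]
  have hσK : σ = (K 0 0 + K 1 1) * σ * (K 0 0 + K 1 1)ᴴ := by
    rw [hK, conjTranspose_one, one_mul, mul_one]
  have hdecomp : (2 : ℝ) • (ptrR σ ⊗ₖ (1 : Matrix (Fin 2) (Fin 2) ℂ)) - σ =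
      (K 0 0 - K 1 1) * σ * (K 0 0 - K 1 1)ᴴ
        + (2 : ℝ) • (K 0 1 * σ * (K 0 1)ᴴ) + (2 : ℝ) • (K 1 0 * σ * (K 1 0)ᴴ) := by
    rw [ptrR_kronecker_one_eq_sum]
    nth_rewrite 2 [hσK]
    simp only [Fin.sum_univ_two, conjTranspose_add, conjTranspose_sub, add_mul, mul_add, sub_mul,
      mul_sub, K]
    module
  rw [hdecomp]
  exact ((hσ.mul_mul_conjTranspose_same _).add
    ((hσ.mul_mul_conjTranspose_same _).smul zero_le_two)).add
    ((hσ.mul_mul_conjTranspose_same _).smul zero_le_two)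

def depolarizeQubit {ι n : Type*} (e : ι ≃ n × Fin 2) (σ : Matrix ι ι ℂ) :
    Matrix ι ι ℂ :=
  (ptrR (σ.submatrix e.symm e.symm) ⊗ₖ piq).submatrix e e

theorem trace_depolarizeQubit {ι n : Type*} [Fintype ι] [Fintype n] (e : ι ≃ n × Fin 2)
    (σ : Matrix ι ι ℂ) : (depolarizeQubit e σ).trace = σ.trace := by
  rw [depolarizeQubit, trace_submatrix_equiv, trace_kronecker, trace_piq, mul_one, trace_ptrR,
    trace_submatrix_equiv]

theorem posSemidef_four_smul_depolarizeQubit_sub {ι n : Type*} [Fintype n] [DecidableEq n]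
    (e : ι ≃ n × Fin 2) {σ : Matrix ι ι ℂ} (hσ : σ.PosSemidef) :
    ((4 : ℝ) • depolarizeQubit e σ - σ).PosSemidef := by
  convert (posSemidef_two_smul_ptrR_kronecker_one_sub (hσ.submatrix e.symm)).submatrix e using 1
  ext i j
  simp [depolarizeQubit, piq]
  ring

theorem swapCh_eq_submatrix (d : ℕ) (X : Matrix (Fin d × Fin d) (Fin d × Fin d) ℂ) :
    swapCh d X = X.submatrix Prod.swap Prod.swap := by
  ext p q
  simp [swapCh, swapOp, mul_apply, Fintype.sum_prod_type, ite_and, apply_ite (starRingEnd ℂ)]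
  rfl

def swapInput (k : Type*) (d : ℕ) : k × (Fin d × Fin d) ≃ k × (Fin d × Fin d) :=
  (Equiv.refl k).prodCongr (Equiv.prodComm _ _)

theorem idTensor_swapCh {k : Type*} (d : ℕ)
    (ρ : Matrix (k × (Fin d × Fin d)) (k × (Fin d × Fin d)) ℂ) :
    idTensor (swapCh d) ρ = ρ.submatrix (swapInput k d) (swapInput k d) := by
  ext p q
  simp only [idTensor, swapCh_eq_submatrix]
  rfl

def splitSndQubit (k : Type*) : k × (Fin 2 × Fin 2) ≃ (k × Fin 2) × Fin 2 :=
  (Equiv.prodAssoc _ _ _).symm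

def splitFstQubit (k : Type*) : k × (Fin 2 × Fin 2) ≃ (k × Fin 2) × Fin 2 :=
  ((Equiv.refl k).prodCongr (Equiv.prodComm _ _)).trans (Equiv.prodAssoc _ _ _).symm

theorem idTensor_kpf2Ch {k : Type*} (p : ℝ)
    (ρ : Matrix (k × (Fin 2 × Fin 2)) (k × (Fin 2 × Fin 2)) ℂ) :
    idTensor (kpf2Ch p) ρ = p • depolarizeQubit (splitSndQubit k) (idTensor (swapCh 2) ρ)
      + (1 - p) • depolarizeQubit (splitFstQubit k) (idTensor (swapCh 2) ρ) := by
  rw [idTensor_swapCh]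
  ext ⟨r, a, b⟩ ⟨r', a', b'⟩
  simp [idTensor, kpf2Ch, depolarizeQubit, ptrFst, ptrSnd, ptrR, splitSndQubit, splitFstQubit,
    swapInput, mul_comm]

theorem half_traceNorm_idTensor_kpf2Ch_sub_swapCh_le {k : Type*} [Fintype k] [DecidableEq k]
    {p : ℝ} (hp : p ∈ Set.Icc (0 : ℝ) 1)
    {ρ : Matrix (k × (Fin 2 × Fin 2)) (k × (Fin 2 × Fin 2)) ℂ} (hρ : IsState ρ) :
    1 / 2 * traceNorm (idTensor (kpf2Ch p) ρ - idTensor (swapCh 2) ρ) ≤ 3 / 4 := by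
  have hσ : (idTensor (swapCh 2) ρ).PosSemidef := idTensor_swapCh 2 ρ ▸ hρ.1.submatrix _
  have hσ1 : (idTensor (swapCh 2) ρ).trace = 1 := by
    rw [idTensor_swapCh, trace_submatrix_equiv, hρ.2]
  have hτ1 : (idTensor (kpf2Ch p) ρ).trace = 1 := by
    simp [idTensor_kpf2Ch, trace_depolarizeQubit, hσ1]
  have hdom : ((4 : ℝ) • idTensor (kpf2Ch p) ρ - idTensor (swapCh 2) ρ).PosSemidef := by
    convert ((posSemidef_four_smul_depolarizeQubit_sub (splitSndQubit k) hσ).smul hp.1).add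
      ((posSemidef_four_smul_depolarizeQubit_sub (splitFstQubit k) hσ).smul
        (sub_nonneg.2 hp.2)) using 1
    rw [idTensor_kpf2Ch]
    module
  have := traceNorm_sub_le_of_posSemidef_smul_sub hσ hσ1 hτ1 (by norm_num) hdom
  linarith

theorem isStarProjection_phiQ : IsStarProjection phiQ where
  isIdempotentElem := by
    ext ⟨x, y⟩ ⟨x', y'⟩
    simp [phiQ, gamOp, mul_apply, Fintype.sum_prod_type, Fin.sum_univ_two]
    split_ifs <;> grind
  isSelfAdjoint := by
    ext ⟨x, y⟩ ⟨x', y'⟩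
    simp [phiQ, gamOp, apply_ite (starRingEnd ℂ), and_comm, map_ofNat]

theorem trace_phiQ : phiQ.trace = 1 := by
  simp [phiQ, gamOp, trace, Fintype.sum_prod_type]

abbrev pairWithReference :
    ((Fin 2 × Fin 2) × (Fin 2 × Fin 2)) ≃ ((Fin 2 × Fin 2) × (Fin 2 × Fin 2)) :=
  Equiv.prodProdProdComm (Fin 2) (Fin 2) (Fin 2) (Fin 2)

theorem depolarizeQubit_splitSndQubit_phiQ_kronecker_phiQ :
    depolarizeQubit (splitSndQubit _)
        ((phiQ ⊗ₖ phiQ).submatrix pairWithReference pairWithReference)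
      = (4 : ℝ)⁻¹ • (phiQ ⊗ₖ 1).submatrix pairWithReference pairWithReference := by
  ext ⟨⟨r₁, r₂⟩, a, b⟩ ⟨⟨r₁', r₂'⟩, a', b'⟩
  simp [depolarizeQubit, splitSndQubit, ptrR, piq, phiQ, gamOp, one_apply, Fin.sum_univ_two]
  split_ifs <;> grind

theorem depolarizeQubit_splitFstQubit_phiQ_kronecker_phiQ :
    depolarizeQubit (splitFstQubit _)
        ((phiQ ⊗ₖ phiQ).submatrix pairWithReference pairWithReference)
      = (4 : ℝ)⁻¹ • (1 ⊗ₖ phiQ).submatrix pairWithReference pairWithReference := by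
  ext ⟨⟨r₁, r₂⟩, a, b⟩ ⟨⟨r₁', r₂'⟩, a', b'⟩
  simp [depolarizeQubit, splitFstQubit, ptrR, piq, phiQ, gamOp, one_apply, Fin.sum_univ_two]
  split_ifs <;> grind

def swapWitness :
    Matrix ((Fin 2 × Fin 2) × (Fin 2 × Fin 2)) ((Fin 2 × Fin 2) × (Fin 2 × Fin 2)) ℂ :=
  ((phiQ ⊗ₖ phiQ).submatrix pairWithReference pairWithReference).submatrix
    (swapInput _ 2) (swapInput _ 2)

theorem isState_swapWitness : IsState swapWitness := by
  have hΦ : phiQ.PosSemidef := nonneg_iff_posSemidef.1 isStarProjection_phiQ.nonneg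
  refine ⟨((hΦ.kronecker hΦ).submatrix _).submatrix _, ?_⟩
  rw [swapWitness, trace_submatrix_equiv, trace_submatrix_equiv, trace_kronecker, trace_phiQ,
    mul_one]

theorem idTensor_swapCh_swapWitness :
    idTensor (swapCh 2) swapWitness
      = (phiQ ⊗ₖ phiQ).submatrix pairWithReference pairWithReference := by
  rw [idTensor_swapCh]
  rfl

theorem idTensor_kpf2Ch_sub_swapCh_swapWitness (p : ℝ) :
    idTensor (kpf2Ch p) swapWitness - idTensor (swapCh 2) swapWitness
      = ((p / 4) • (phiQ ⊗ₖ (1 - phiQ)) + ((1 - p) / 4) • ((1 - phiQ) ⊗ₖ phiQ)).submatrix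
          pairWithReference pairWithReference
        - ((3 / 4 : ℝ) • (phiQ ⊗ₖ phiQ)).submatrix pairWithReference pairWithReference := by
  have h1 : phiQ ⊗ₖ (1 : Matrix (Fin 2 × Fin 2) (Fin 2 × Fin 2) ℂ)
      = phiQ ⊗ₖ (1 - phiQ) + phiQ ⊗ₖ phiQ := by
    rw [← kronecker_add, sub_add_cancel]
  have h2 : (1 : Matrix (Fin 2 × Fin 2) (Fin 2 × Fin 2) ℂ) ⊗ₖ phiQ
      = (1 - phiQ) ⊗ₖ phiQ + phiQ ⊗ₖ phiQ := by
    rw [← add_kronecker, sub_add_cancel]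
  rw [idTensor_kpf2Ch, idTensor_swapCh_swapWitness,
    depolarizeQubit_splitSndQubit_phiQ_kronecker_phiQ,
    depolarizeQubit_splitFstQubit_phiQ_kronecker_phiQ, h1, h2]
  ext i j
  simp only [Matrix.sub_apply, Matrix.add_apply, Matrix.smul_apply, submatrix_apply,
    Complex.real_smul]
  push_cast
  ring

theorem half_traceNorm_idTensor_kpf2Ch_sub_swapCh_swapWitness {p : ℝ}
    (hp : p ∈ Set.Icc (0 : ℝ) 1) :
    1 / 2 * traceNorm (idTensor (kpf2Ch p) swapWitness - idTensor (swapCh 2) swapWitness)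
      = 3 / 4 := by
  have hΦ := isStarProjection_phiQ
  have hΦ0 : phiQ.PosSemidef := nonneg_iff_posSemidef.1 hΦ.nonneg
  have hΦ1 : (1 - phiQ).PosSemidef := nonneg_iff_posSemidef.1 hΦ.one_sub_nonneg
  have hA : ((p / 4) • (phiQ ⊗ₖ (1 - phiQ)) + ((1 - p) / 4) • ((1 - phiQ) ⊗ₖ phiQ)).PosSemidef :=
    ((hΦ0.kronecker hΦ1).smul (by linarith [hp.1])).add
      ((hΦ1.kronecker hΦ0).smul (by linarith [hp.2]))
  have hB : ((3 / 4 : ℝ) • (phiQ ⊗ₖ phiQ)).PosSemidef := (hΦ0.kronecker hΦ0).smul (by norm_num)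
  have hAB : ((p / 4) • (phiQ ⊗ₖ (1 - phiQ)) + ((1 - p) / 4) • ((1 - phiQ) ⊗ₖ phiQ))
      * ((3 / 4 : ℝ) • (phiQ ⊗ₖ phiQ)) = 0 := by
    simp only [add_mul, smul_mul_smul_comm, ← mul_kronecker_mul, hΦ.one_sub_mul_self,
      hΦ.isIdempotentElem.eq, kronecker_zero, zero_kronecker, smul_zero, add_zero]
  rw [idTensor_kpf2Ch_sub_swapCh_swapWitness, traceNorm_sub_of_mul_eq_zero (hA.submatrix _)
    (hB.submatrix _) (by rw [submatrix_mul_equiv, hAB]; rfl)]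
  simp [trace_submatrix_equiv, trace_kronecker, trace_phiQ, trace_sub]
  ring

/-- the normalized diamond distance between the second KPF16 protocol and
the ideal qubit swap channel equals `3/4` for every `p ∈ [0,1]`. -/
theorem stmt17 (p : ℝ) (hp : p ∈ Set.Icc (0 : ℝ) 1) :
    dDist (kpf2Ch p) (swapCh 2) = 3 / 4 := by
  refine IsGreatest.csSup_eq ⟨⟨swapWitness, isState_swapWitness,
    (half_traceNorm_idTensor_kpf2Ch_sub_swapCh_swapWitness hp).symm⟩, ?_⟩
  rintro x ⟨ρ, hρ, rfl⟩
  exact half_traceNorm_idTensor_kpf2Ch_sub_swapCh_le hp hρ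

end
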